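/- Let H be a group that is δ-hyperbolic with respect to a finite generating set S, and let z, b ∈ H. There exist an element x ∈ H and a constant c, given by a computable function of δ, ♯S and |b|, such that for every integer k one has z⁻¹ b^k z = x⁻¹ ·_c b^k ·_c x (with the same x for all k). -/

import Mathlib

/-!
Take `x` of minimal length in the coset `⟨b⟩ z`; then `x⁻¹ b^k x = z⁻¹ b^k z`, and replacing `k`
by `-k` it suffices to bound the Gromov product `γ = (x | b^k)` at `1`. By minimality of `x`, every
point `W i` of a geodesic `[1, b^k]` with `i ≤ γ` is at distance at least `i - δ` from each `b^j`.
Two thin triangles show that a translation `a` commuting with `g` slides the middle part of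
`[1, g]` along itself by `|g| - |a⁻¹ g|`, up to `2δ`. For `a = b^{±j}` and `g = b^k` the two facts
give `|g| - |a⁻¹ g| ≤ 3δ`, and sliding by `a` and back by `a⁻¹` gives `|a⁻¹ g| - |g| ≤ 7δ`.
So a single point `W i` with `i` large conjugates every `b^j` with `j < J` into the ball of
radius `9δ`. When `J` exceeds the size of that ball, pigeonhole gives `orderOf b < J`, so
`2γ ≤ |b^k| ≤ J |b|`, and `γ` is bounded.
-/

variable {G : Type*} [Group G]

/-- Word length of `g` with respect to a generating set `S`: the least number of
letters from `S ∪ S⁻¹` whose product is `g`. -/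
noncomputable def wlen (S : Set G) (g : G) : ℕ :=
  sInf {n : ℕ | ∃ L : List G, (∀ x ∈ L, x ∈ S ∨ x⁻¹ ∈ S) ∧ L.length = n ∧ L.prod = g}

/-- A discrete geodesic from `a` to `b` in the Cayley graph of `G` w.r.t. `S`:
the sequence of vertices visited by a geodesic path. -/
def IsDGeodesic (S : Set G) (a b : G) (p : ℕ → G) : Prop :=
  p 0 = a ∧ p (wlen S (a⁻¹ * b)) = b ∧
    ∀ i ≤ wlen S (a⁻¹ * b), ∀ j ≤ wlen S (a⁻¹ * b),
      wlen S ((p i)⁻¹ * p j) = Nat.dist i j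

/-- `G` is `δ`-hyperbolic with respect to `S`: every geodesic triangle in the
Cayley graph `Γ(G,S)` is `δ`-thin, rendered on the vertex set. -/
def GroupHyperbolic (S : Set G) (δ : ℝ) : Prop :=
  ∀ a b c : G, ∀ p q : ℕ → G, IsDGeodesic S a b p → IsDGeodesic S a c q →
    ∀ i : ℕ,
      (i : ℝ) ≤ ((wlen S (a⁻¹ * b) : ℝ) + (wlen S (a⁻¹ * c) : ℝ)
          - (wlen S (b⁻¹ * c) : ℝ)) / 2 →
      (wlen S ((p i)⁻¹ * q i) : ℝ) ≤ δ

/-- The small-cancellation notation `u ·_c v`: the product `u * v` cancels less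
than `c`, i.e. `(|u| + |v| - |uv|)/2 < c`. -/
def CDot (S : Set G) (c : ℝ) (u v : G) : Prop :=
  ((wlen S u : ℝ) + (wlen S v : ℝ) - (wlen S (u * v) : ℝ)) / 2 < c

theorem Nat.cast_dist_le_of_le_add {m n : ℕ} {r : ℝ} (h₁ : (m : ℝ) ≤ n + r)
    (h₂ : (n : ℝ) ≤ m + r) : (Nat.dist m n : ℝ) ≤ r := by
  rcases le_total m n with h | h
  · rw [Nat.dist_eq_sub_of_le h, Nat.cast_sub h]; linarith
  · rw [Nat.dist_eq_sub_of_le_right h, Nat.cast_sub h]; linarith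

section WordLength

variable {S : Set G}

theorem wlen_le_length {L : List G} (hL : ∀ x ∈ L, x ∈ S ∨ x⁻¹ ∈ S) :
    wlen S L.prod ≤ L.length :=
  Nat.sInf_le ⟨L, hL, rfl, rfl⟩

@[simp]
theorem wlen_one : wlen S (1 : G) = 0 :=
  Nat.le_zero.mp (wlen_le_length (L := []) (by simp))

theorem exists_word_length_eq_wlen (hgen : Subgroup.closure S = ⊤) (g : G) :
    ∃ L : List G, (∀ x ∈ L, x ∈ S ∨ x⁻¹ ∈ S) ∧ L.length = wlen S g ∧ L.prod = g := by
  have hg : g ∈ Submonoid.closure (S ∪ S⁻¹) := by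
    rw [← Subgroup.closure_toSubmonoid, Subgroup.mem_toSubmonoid, hgen]
    trivial
  obtain ⟨L, hL, hprod⟩ := Submonoid.exists_list_of_mem_closure hg
  have hne : {n | ∃ L : List G, (∀ x ∈ L, x ∈ S ∨ x⁻¹ ∈ S) ∧ L.length = n ∧ L.prod = g}.Nonempty :=
    ⟨L.length, L, hL, rfl, hprod⟩
  exact Nat.sInf_mem hne

theorem wlen_mul_le (hgen : Subgroup.closure S = ⊤) (g h : G) :
    wlen S (g * h) ≤ wlen S g + wlen S h := by
  obtain ⟨L, hL, hlen, rfl⟩ := exists_word_length_eq_wlen hgen g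
  obtain ⟨M, hM, hlen', rfl⟩ := exists_word_length_eq_wlen hgen h
  rw [← List.prod_append, ← hlen, ← hlen', ← List.length_append]
  exact wlen_le_length fun x hx => (List.mem_append.mp hx).elim (hL x) (hM x)

theorem wlen_inv_le (hgen : Subgroup.closure S = ⊤) (g : G) : wlen S g⁻¹ ≤ wlen S g := by
  obtain ⟨L, hL, hlen, rfl⟩ := exists_word_length_eq_wlen hgen g
  rw [List.prod_inv_reverse, ← hlen, ← List.length_map (f := (·⁻¹)), ← List.length_reverse]
  refine wlen_le_length fun x hx => ?_
  obtain ⟨y, hy, rfl⟩ := List.mem_map.mp (List.mem_reverse.mp hx)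
  simpa [or_comm] using hL y hy

@[simp]
theorem wlen_inv (hgen : Subgroup.closure S = ⊤) (g : G) : wlen S g⁻¹ = wlen S g :=
  (wlen_inv_le hgen g).antisymm (by simpa using wlen_inv_le hgen g⁻¹)

theorem wlen_inv_mul_comm (hgen : Subgroup.closure S = ⊤) (g h : G) :
    wlen S (g⁻¹ * h) = wlen S (h⁻¹ * g) := by
  rw [← wlen_inv hgen, mul_inv_rev, inv_inv]

theorem wlen_le_add_wlen_inv_mul (hgen : Subgroup.closure S = ⊤) (a g : G) :
    wlen S g ≤ wlen S a + wlen S (a⁻¹ * g) := by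
  simpa using wlen_mul_le hgen a (a⁻¹ * g)

theorem wlen_inv_mul_le_add_wlen (hgen : Subgroup.closure S = ⊤) (a g : G) :
    wlen S (a⁻¹ * g) ≤ wlen S a + wlen S g := by
  simpa [wlen_inv hgen] using wlen_mul_le hgen a⁻¹ g

theorem wlen_inv_mul_le_add (hgen : Subgroup.closure S = ⊤) (a b c : G) :
    wlen S (a⁻¹ * c) ≤ wlen S (a⁻¹ * b) + wlen S (b⁻¹ * c) := by
  simpa [mul_assoc] using wlen_mul_le hgen (a⁻¹ * b) (b⁻¹ * c)

theorem wlen_pow_le (hgen : Subgroup.closure S = ⊤) (b : G) (n : ℕ) :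
    wlen S (b ^ n) ≤ n * wlen S b := by
  induction n with
  | zero => simp
  | succ n ih =>
    rw [pow_succ, Nat.succ_mul]
    exact (wlen_mul_le hgen _ _).trans (Nat.add_le_add_right ih _)

theorem wlen_zpow_le_orderOf_mul (hgen : Subgroup.closure S = ⊤) {b : G}
    (hb : 0 < orderOf b) (k : ℤ) : wlen S (b ^ k) ≤ orderOf b * wlen S b := by
  have hmod : 0 ≤ k % (orderOf b : ℤ) := Int.emod_nonneg k (by omega)
  rw [← zpow_mod_orderOf, ← Int.toNat_of_nonneg hmod, zpow_natCast]
  refine (wlen_pow_le hgen b _).trans (Nat.mul_le_mul_right _ ?_)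
  have := Int.emod_lt_of_pos k (by omega : (0 : ℤ) < orderOf b)
  omega

open Pointwise in
theorem exists_finset_wlen_le (hS : S.Finite) (hgen : Subgroup.closure S = ⊤) (R : ℕ) :
    ∃ F : Finset G, (∀ g, wlen S g ≤ R → g ∈ F) ∧ F.card ≤ (2 * S.ncard + 1) ^ R := by
  classical
  set T : Finset G := insert 1 (hS.toFinset ∪ hS.toFinset⁻¹)
  have hT : T.card ≤ 2 * S.ncard + 1 := by
    refine (Finset.card_insert_le _ _).trans (Nat.add_le_add_right ?_ 1)
    refine (Finset.card_union_le _ _).trans ?_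
    rw [Finset.card_inv, ← Set.ncard_eq_toFinset_card S hS]
    omega
  have hword : ∀ L : List G, (∀ x ∈ L, x ∈ S ∨ x⁻¹ ∈ S) → L.prod ∈ T ^ L.length := by
    intro L hL
    induction L with
    | nil => simp
    | cons a L ih =>
      rw [List.prod_cons, List.length_cons, pow_succ']
      refine Finset.mul_mem_mul ?_ (ih fun x hx => hL x (List.mem_cons_of_mem a hx))
      simpa [T] using Or.inr (hL a List.mem_cons_self)
  refine ⟨T ^ R, fun g hg => ?_, Finset.card_pow_le.trans (Nat.pow_le_pow_left hT R)⟩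
  obtain ⟨L, hL, hlen, rfl⟩ := exists_word_length_eq_wlen hgen g
  exact Finset.pow_subset_pow_right (by simp [T]) (hlen ▸ hg) (hword L hL)

end WordLength

section Geodesics

variable {S : Set G}

theorem exists_isDGeodesic_one (hgen : Subgroup.closure S = ⊤) (g : G) :
    ∃ p : ℕ → G, IsDGeodesic S 1 g p := by
  obtain ⟨L, hL, hlen, rfl⟩ := exists_word_length_eq_wlen hgen g
  have hsub : ∀ {i j}, i ≤ j → j ≤ L.length →
      wlen S ((L.take i).prod⁻¹ * (L.take j).prod) = j - i := by
    intro i j hij hj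
    have hseg : (L.take i).prod⁻¹ * (L.take j).prod = ((L.drop i).take (j - i)).prod := by
      conv_lhs => rw [← Nat.add_sub_cancel' hij, List.take_add, List.prod_append,
        inv_mul_cancel_left]
    refine le_antisymm ?_ ?_
    · rw [hseg]
      refine (wlen_le_length fun x hx => hL x ?_).trans (by simp)
      exact List.drop_subset i L (List.take_subset _ _ hx)
    · obtain ⟨M, hM, hMlen, hMprod⟩ := exists_word_length_eq_wlen hgen
        ((L.take i).prod⁻¹ * (L.take j).prod)
      have hprod : (L.take i ++ M ++ L.drop j).prod = L.prod := by
        rw [List.prod_append, List.prod_append, hMprod, mul_inv_cancel_left,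
          List.prod_take_mul_prod_drop]
      have := hprod ▸ wlen_le_length (S := S) (L := L.take i ++ M ++ L.drop j) fun x hx => by
        simp only [List.mem_append] at hx
        rcases hx with (hx | hx) | hx
        exacts [hL x (List.take_subset _ _ hx), hM x hx, hL x (List.drop_subset _ _ hx)]
      simp only [List.length_append, List.length_take, List.length_drop] at this
      omega
  refine ⟨fun i => (L.take i).prod, by simp, by simp [← hlen], fun i hi j hj => ?_⟩
  simp only [inv_one, one_mul, ← hlen] at hi hj ⊢
  rcases le_total i j with h | h
  · rw [hsub h hj, Nat.dist_eq_sub_of_le h]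
  · rw [wlen_inv_mul_comm hgen, hsub h hi, Nat.dist_eq_sub_of_le_right h]

namespace IsDGeodesic

variable {a c : G} {p : ℕ → G}

theorem wlen_apply {g : G} (hp : IsDGeodesic S 1 g p) {i : ℕ} (hi : i ≤ wlen S g) :
    wlen S (p i) = i := by
  obtain ⟨h0, -, hd⟩ := hp
  simpa [h0, Nat.dist_zero_left] using hd 0 (Nat.zero_le _) i (by simpa using hi)

theorem wlen_apply_inv_mul {g : G} (hp : IsDGeodesic S 1 g p) {i : ℕ} (hi : i ≤ wlen S g) :
    wlen S ((p i)⁻¹ * g) = wlen S g - i := by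
  obtain ⟨-, h1, hd⟩ := hp
  simp only [inv_one, one_mul] at h1 hd
  simpa [h1, Nat.dist_eq_sub_of_le hi] using hd i hi (wlen S g) le_rfl

theorem mul_left (hp : IsDGeodesic S a c p) (g : G) :
    IsDGeodesic S (g * a) (g * c) (fun i => g * p i) := by
  obtain ⟨h0, h1, hd⟩ := hp
  have e : ∀ u v : G, (g * u)⁻¹ * (g * v) = u⁻¹ * v := fun u v => by group
  refine ⟨by simp [h0], ?_, ?_⟩ <;> simp only [e]
  · rw [h1]
  · exact hd

theorem reverse (hgen : Subgroup.closure S = ⊤) (hp : IsDGeodesic S a c p) :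
    IsDGeodesic S c a (fun i => p (wlen S (a⁻¹ * c) - i)) := by
  obtain ⟨h0, h1, hd⟩ := hp
  rw [IsDGeodesic, wlen_inv_mul_comm hgen c a]
  refine ⟨by simpa using h1, by simpa using h0, fun i hi j hj => ?_⟩
  rw [hd _ (by omega) _ (by omega), Nat.dist, Nat.dist]
  omega

end IsDGeodesic

end Geodesics

noncomputable def gromovProd (S : Set G) (x y : G) : ℝ :=
  ((wlen S x : ℝ) + wlen S y - wlen S (x⁻¹ * y)) / 2

section GromovProduct

variable {S : Set G}

theorem gromovProd_comm (hgen : Subgroup.closure S = ⊤) (x y : G) :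
    gromovProd S x y = gromovProd S y x := by
  rw [gromovProd, gromovProd, wlen_inv_mul_comm hgen, add_comm (wlen S x : ℝ)]

theorem gromovProd_le_wlen_left (hgen : Subgroup.closure S = ⊤) (x y : G) :
    gromovProd S x y ≤ wlen S x := by
  have : (wlen S y : ℝ) ≤ wlen S x + wlen S (x⁻¹ * y) := by
    exact_mod_cast wlen_le_add_wlen_inv_mul hgen x y
  rw [gromovProd]
  linarith

theorem cDot_iff_gromovProd_lt (hgen : Subgroup.closure S = ⊤) (c : ℝ) (u v : G) :
    CDot S c u v ↔ gromovProd S u⁻¹ v < c := by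
  rw [CDot, gromovProd, wlen_inv hgen, inv_inv]

end GromovProduct

namespace GroupHyperbolic

variable {S : Set G} {δ : ℝ}

theorem wlen_inv_mul_le (hyp : GroupHyperbolic S δ) {c g h : G} {p q : ℕ → G}
    (hp : IsDGeodesic S c g p) (hq : IsDGeodesic S c h q) {i : ℕ}
    (hi : (i : ℝ) ≤ gromovProd S (c⁻¹ * g) (c⁻¹ * h)) :
    (wlen S ((p i)⁻¹ * q i) : ℝ) ≤ δ := by
  refine hyp c g h p q hp hq i ?_
  rwa [gromovProd, mul_inv_rev, inv_inv, mul_assoc, mul_inv_cancel_left] at hi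

theorem exists_wlen_apply_inv_mul_mul_apply_le (hyp : GroupHyperbolic S δ)
    (hgen : Subgroup.closure S = ⊤) {a g : G} (hag : Commute a g) {W : ℕ → G}
    (hW : IsDGeodesic S 1 g W) {i : ℕ} (hai : 2 * wlen S a ≤ i)
    (hig : i + wlen S a ≤ wlen S g) :
    ∃ s : ℕ, s + wlen S g = i + wlen S (a⁻¹ * g) ∧
      (wlen S ((W i)⁻¹ * (a * W s)) : ℝ) ≤ 2 * δ := by
  obtain ⟨V, hV⟩ := exists_isDGeodesic_one hgen (a⁻¹ * g)
  have hg₁ := wlen_le_add_wlen_inv_mul hgen a g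
  have hg₂ := wlen_inv_mul_le_add_wlen hgen a g
  set s := i + wlen S (a⁻¹ * g) - wlen S g
  refine ⟨s, by omega, ?_⟩
  -- the triangle `1, a⁻¹ g, g`, whose side from `a⁻¹ g` to `g` has length `|a|`
  have hV_near : (wlen S ((W s)⁻¹ * V s) : ℝ) ≤ δ := by
    refine hyp.wlen_inv_mul_le hW hV ?_
    have hconj : g⁻¹ * (a⁻¹ * g) = a⁻¹ := by rw [hag.inv_left.eq, inv_mul_cancel_left]
    rw [gromovProd, inv_one, one_mul, one_mul, hconj, wlen_inv hgen, le_div_iff₀ two_pos]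
    have := (Nat.cast_le (α := ℝ)).2 (by omega : s * 2 + wlen S a ≤ wlen S g + wlen S (a⁻¹ * g))
    push_cast at this
    linarith
  -- the triangle `g, 1, a`, whose side from `g` to `a` is the translate of `V` by `a`
  have hp := hW.reverse hgen
  have hq := (hV.reverse hgen).mul_left a
  simp only [inv_one, one_mul, mul_inv_cancel_left, mul_one] at hp hq
  have hW_near := hyp.wlen_inv_mul_le hp hq (i := wlen S g - i) (by
    rw [gromovProd, mul_one, inv_inv, mul_inv_cancel_left, wlen_inv hgen,
      wlen_inv_mul_comm hgen g a, le_div_iff₀ two_pos]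
    have := (Nat.cast_le (α := ℝ)).2
      (by omega : (wlen S g - i) * 2 + wlen S a ≤ wlen S g + wlen S (a⁻¹ * g))
    push_cast at this
    linarith)
  rw [Nat.sub_sub_self (by omega), show wlen S (a⁻¹ * g) - (wlen S g - i) = s by omega]
    at hW_near
  have htri := wlen_inv_mul_le_add hgen (W i) (a * V s) (a * W s)
  rw [show (a * V s)⁻¹ * (a * W s) = (V s)⁻¹ * W s by group, wlen_inv_mul_comm hgen (V s)] at htri
  have : (wlen S ((W i)⁻¹ * (a * W s)) : ℝ) ≤
      wlen S ((W i)⁻¹ * (a * V s)) + wlen S ((W s)⁻¹ * V s) := by exact_mod_cast htri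
  linarith

theorem le_wlen_inv_mul_apply_add (hyp : GroupHyperbolic S δ) (hgen : Subgroup.closure S = ⊤)
    {x a g : G} (hx : wlen S x ≤ wlen S (a⁻¹ * x)) {W : ℕ → G} (hW : IsDGeodesic S 1 g W)
    {i : ℕ} (hi : (i : ℝ) ≤ gromovProd S x g) :
    (i : ℝ) ≤ wlen S (a⁻¹ * W i) + δ := by
  obtain ⟨π, hπ⟩ := exists_isDGeodesic_one hgen x
  have hix : i ≤ wlen S x := by exact_mod_cast hi.trans (gromovProd_le_wlen_left hgen x g)
  have hnear : (wlen S ((π i)⁻¹ * W i) : ℝ) ≤ δ :=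
    hyp.wlen_inv_mul_le hπ hW (by simpa using hi)
  -- `x` is no closer to `a` than to `1`, so neither is the point `π i` of `[1, x]`
  have hfar := wlen_inv_mul_le_add hgen a (π i) x
  rw [hπ.wlen_apply_inv_mul hix] at hfar
  have htri := wlen_inv_mul_le_add hgen a (W i) (π i)
  rw [wlen_inv_mul_comm hgen (W i)] at htri
  have : i ≤ wlen S (a⁻¹ * W i) + wlen S ((π i)⁻¹ * W i) := by omega
  have : (i : ℝ) ≤ wlen S (a⁻¹ * W i) + wlen S ((π i)⁻¹ * W i) := by exact_mod_cast this
  linarith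

theorem wlen_le_wlen_inv_mul_add (hyp : GroupHyperbolic S δ) (hgen : Subgroup.closure S = ⊤)
    {x a g : G} (hag : Commute a g) (hx : wlen S x ≤ wlen S (a⁻¹ * x))
    (hxg : 2 * (wlen S a : ℝ) ≤ gromovProd S x g) (hg : 4 * wlen S a ≤ wlen S g) :
    (wlen S g : ℝ) ≤ wlen S (a⁻¹ * g) + 3 * δ := by
  obtain ⟨W, hW⟩ := exists_isDGeodesic_one hgen g
  obtain ⟨s, hs, hnear⟩ :=
    hyp.exists_wlen_apply_inv_mul_mul_apply_le hgen hag hW (i := 2 * wlen S a) le_rfl (by omega)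
  have hfar :=
    hyp.le_wlen_inv_mul_apply_add hgen hx hW (i := 2 * wlen S a) (by push_cast; exact hxg)
  push_cast at hfar
  have hg₂ := wlen_inv_mul_le_add_wlen hgen a g
  have htri := wlen_inv_mul_le_add hgen a (a * W s) (W (2 * wlen S a))
  rw [inv_mul_cancel_left, hW.wlen_apply (by omega), wlen_inv_mul_comm hgen (a * W s)] at htri
  have : (wlen S (a⁻¹ * W (2 * wlen S a)) : ℝ) ≤
      s + wlen S ((W (2 * wlen S a))⁻¹ * (a * W s)) := by exact_mod_cast htri
  have : (s : ℝ) + wlen S g = 2 * wlen S a + wlen S (a⁻¹ * g) := by exact_mod_cast hs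
  linarith

theorem wlen_inv_mul_add_wlen_mul_le (hyp : GroupHyperbolic S δ)
    (hgen : Subgroup.closure S = ⊤) {a g : G} (hag : Commute a g)
    (hg : 6 * wlen S a ≤ wlen S g) :
    (wlen S (a⁻¹ * g) + wlen S (a * g) : ℝ) ≤ 2 * wlen S g + 4 * δ := by
  obtain ⟨W, hW⟩ := exists_isDGeodesic_one hgen g
  have hg₁ := wlen_le_add_wlen_inv_mul hgen a g
  have hg₂ := wlen_inv_mul_le_add_wlen hgen a g
  have hg₃ : wlen S (a * g) ≤ wlen S a + wlen S g := wlen_mul_le hgen a g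
  set i := 3 * wlen S a
  obtain ⟨s, hs, hnear⟩ :=
    hyp.exists_wlen_apply_inv_mul_mul_apply_le hgen hag hW (i := i) (by omega) (by omega)
  obtain ⟨s', hs', hnear'⟩ := hyp.exists_wlen_apply_inv_mul_mul_apply_le hgen hag.inv_left hW
    (i := s) (by rw [wlen_inv hgen]; omega) (by rw [wlen_inv hgen]; omega)
  rw [inv_inv] at hs'
  -- translating by `a` and back moves `W i` to within `4δ` of `W s'`
  have htri := wlen_inv_mul_le_add hgen (W i) (a * W s) (W s')
  rw [show (a * W s)⁻¹ * W s' = (W s)⁻¹ * (a⁻¹ * W s') by group,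
    hW.2.2 i (by simp; omega) s' (by simp; omega)] at htri
  have : (s' : ℝ) ≤ i + wlen S ((W i)⁻¹ * (a * W s)) + wlen S ((W s)⁻¹ * (a⁻¹ * W s')) := by
    exact_mod_cast (Nat.dist_tri_right i s').trans (by omega)
  have : (s' : ℝ) + 2 * wlen S g = i + wlen S (a⁻¹ * g) + wlen S (a * g) := by
    exact_mod_cast (by omega : s' + 2 * wlen S g = i + wlen S (a⁻¹ * g) + wlen S (a * g))
  linarith

theorem wlen_conj_apply_le (hyp : GroupHyperbolic S δ) (hgen : Subgroup.closure S = ⊤)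
    {x a g : G} (hag : Commute a g) (hx₁ : wlen S x ≤ wlen S (a⁻¹ * x))
    (hx₂ : wlen S x ≤ wlen S (a * x)) (hxg : wlen S x ≤ wlen S (x⁻¹ * g))
    {W : ℕ → G} (hW : IsDGeodesic S 1 g W) {i : ℕ} (hi : (i : ℝ) ≤ gromovProd S x g)
    (hai : 3 * wlen S a ≤ i) :
    (wlen S ((W i)⁻¹ * a * W i) : ℝ) ≤ 9 * δ := by
  have hig : 2 * i ≤ wlen S g := by
    have : (wlen S x : ℝ) ≤ wlen S (x⁻¹ * g) := by exact_mod_cast hxg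
    have : (2 * i : ℝ) ≤ wlen S g := by rw [gromovProd] at hi; linarith
    exact_mod_cast this
  have hai' : 2 * (wlen S a : ℝ) ≤ gromovProd S x g := by
    refine le_trans ?_ hi
    exact_mod_cast (by omega : 2 * wlen S a ≤ i)
  have hupper := hyp.wlen_le_wlen_inv_mul_add hgen hag hx₁ hai' (by omega)
  have hupper' := hyp.wlen_le_wlen_inv_mul_add hgen hag.inv_left (by rwa [inv_inv])
    (by rwa [wlen_inv hgen]) (by rw [wlen_inv hgen]; omega)
  rw [inv_inv] at hupper'
  have hsum := hyp.wlen_inv_mul_add_wlen_mul_le hgen hag (by omega)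
  obtain ⟨s, hs, hnear⟩ :=
    hyp.exists_wlen_apply_inv_mul_mul_apply_le hgen hag hW (i := i) (by omega) (by omega)
  have hg₂ := wlen_inv_mul_le_add_wlen hgen a g
  have htri := wlen_inv_mul_le_add hgen (W i) (a * W s) (a * W i)
  rw [show (a * W s)⁻¹ * (a * W i) = (W s)⁻¹ * W i by group,
    hW.2.2 s (by simp; omega) i (by simp; omega), ← mul_assoc] at htri
  have hδ : (0 : ℝ) ≤ 2 * δ := (Nat.cast_nonneg _).trans hnear
  have hdist : (Nat.dist s i : ℝ) ≤ 7 * δ := by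
    rw [Nat.dist_eq_intro hs]
    exact Nat.cast_dist_le_of_le_add (by linarith) (by linarith)
  have : (wlen S ((W i)⁻¹ * a * W i) : ℝ) ≤ wlen S ((W i)⁻¹ * (a * W s)) + Nat.dist s i := by
    exact_mod_cast htri
  linarith

end GroupHyperbolic

theorem orderOf_pos_lt_of_wlen_conj_pow_le {S : Set G} (hS : S.Finite)
    (hgen : Subgroup.closure S = ⊤) (c b : G) {R J : ℕ} (hJ : (2 * S.ncard + 1) ^ R < J)
    (hconj : ∀ j < J, wlen S (c⁻¹ * b ^ j * c) ≤ R) :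
    0 < orderOf b ∧ orderOf b < J := by
  obtain ⟨F, hF, hcard⟩ := exists_finset_wlen_le hS hgen R
  obtain ⟨j₁, hj₁, j₂, hj₂, hne, heq⟩ := Finset.exists_ne_map_eq_of_card_lt_of_maps_to
    (t := F) (f := fun j => c⁻¹ * b ^ j * c) (by simpa using hcard.trans_lt hJ)
    fun j hj => hF _ (hconj j (Finset.mem_range.mp hj))
  rw [Finset.mem_range] at hj₁ hj₂
  have hpow : b ^ j₁ = b ^ j₂ := mul_left_cancel (mul_right_cancel heq)
  have key : ∀ {m n : ℕ}, m < n → n < J → b ^ m = b ^ n → 0 < orderOf b ∧ orderOf b < J := by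
    intro m n hmn hn h
    have h1 : b ^ (n - m) = 1 := by
      rw [← mul_eq_right, pow_sub_mul_pow b hmn.le, h]
    exact ⟨orderOf_pos_iff.mpr (isOfFinOrder_iff_pow_eq_one.mpr ⟨n - m, by omega, h1⟩),
      (orderOf_le_of_pow_eq_one (by omega) h1).trans_lt (by omega)⟩
  rcases Nat.lt_or_gt_of_ne hne with h | h
  exacts [key h hj₂ hpow, key h hj₁ hpow.symm]

-- `(2 * n + 1) ^ ⌊9 * δ⌋₊ + 1` exceeds the number of elements of length at most `9 * δ`.
noncomputable def cancellationBound (δ : ℝ) (n m : ℕ) : ℝ :=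
  3 * m * ((2 * n + 1) ^ ⌊9 * δ⌋₊ + 1 : ℕ) + 1

theorem GroupHyperbolic.gromovProd_zpow_lt {S : Set G} {δ : ℝ} (hyp : GroupHyperbolic S δ)
    (hS : S.Finite) (hgen : Subgroup.closure S = ⊤) {b x : G}
    (hmin : ∀ t : ℤ, wlen S x ≤ wlen S (b ^ t * x)) (k : ℤ) :
    gromovProd S x (b ^ k) < cancellationBound δ S.ncard (wlen S b) := by
  set J := (2 * S.ncard + 1) ^ ⌊9 * δ⌋₊ + 1
  set i := 3 * wlen S b * J
  by_contra! hγ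
  replace hγ : (3 * wlen S b * J : ℝ) + 1 ≤ gromovProd S x (b ^ k) := hγ
  have hi : (i : ℝ) ≤ gromovProd S x (b ^ k) := by push_cast [i]; linarith
  have hxg : wlen S x ≤ wlen S (x⁻¹ * b ^ k) := by
    simpa [wlen_inv_mul_comm hgen x] using hmin (-k)
  obtain ⟨W, hW⟩ := exists_isDGeodesic_one hgen (b ^ k)
  have hconj : ∀ j < J, wlen S ((W i)⁻¹ * b ^ j * W i) ≤ ⌊9 * δ⌋₊ := by
    intro j hj
    refine Nat.le_floor (hyp.wlen_conj_apply_le hgen ((Commute.refl b).pow_left j |>.zpow_right k)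
      ?_ ?_ hxg hW hi ?_)
    · simpa using hmin (-j)
    · simpa using hmin j
    · have := wlen_pow_le hgen b j
      have : j * wlen S b ≤ J * wlen S b := Nat.mul_le_mul_right _ hj.le
      simp only [i]
      nlinarith
  obtain ⟨hpos, hlt⟩ := orderOf_pos_lt_of_wlen_conj_pow_le hS hgen (W i) b (by omega) hconj
  have hbk : wlen S (b ^ k) ≤ J * wlen S b :=
    (wlen_zpow_le_orderOf_mul hgen hpos k).trans (Nat.mul_le_mul_right _ hlt.le)
  have : (wlen S (b ^ k) : ℝ) ≤ J * wlen S b := by exact_mod_cast hbk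
  have : (wlen S x : ℝ) ≤ wlen S (x⁻¹ * b ^ k) := by exact_mod_cast hxg
  have : 2 * gromovProd S x (b ^ k) ≤ wlen S (b ^ k) := by rw [gromovProd]; linarith
  have : (0 : ℝ) ≤ J * wlen S b := by positivity
  linarith

/-- (Lemma 2.21 of the paper.)  There is a constant
`c = c(δ, ♯S, |b|)` such that for all `z, b` there is one `x` working for all
integers `k` simultaneously: `z⁻¹ b^k z = x⁻¹ ·_c b^k ·_c x`. -/
theorem stmt12 :
    ∃ c : ℝ → ℕ → ℕ → ℝ,
      ∀ (H : Type) [Group H] (S : Set H) (δ : ℝ),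
        S.Finite → Subgroup.closure S = ⊤ → 0 ≤ δ → GroupHyperbolic S δ →
        ∀ z b : H,
          ∃ x : H, ∀ k : ℤ,
            z⁻¹ * b ^ k * z = x⁻¹ * b ^ k * x ∧
            CDot S (c δ S.ncard (wlen S b)) x⁻¹ (b ^ k) ∧
            CDot S (c δ S.ncard (wlen S b)) (b ^ k) x := by
  refine ⟨cancellationBound, fun H _ S δ hS hgen _ hyp z b => ?_⟩
  set j₀ := Function.argmin fun j : ℤ => wlen S (b ^ j * z)
  have hmin : ∀ t : ℤ, wlen S (b ^ j₀ * z) ≤ wlen S (b ^ t * (b ^ j₀ * z)) := fun t => by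
    rw [← mul_assoc, ← zpow_add]
    exact Function.argmin_le (fun j : ℤ => wlen S (b ^ j * z)) (t + j₀)
  refine ⟨b ^ j₀ * z, fun k => ⟨?_, ?_, ?_⟩⟩
  · group
  · rw [cDot_iff_gromovProd_lt hgen, inv_inv]
    exact hyp.gromovProd_zpow_lt hS hgen hmin k
  · rw [cDot_iff_gromovProd_lt hgen, gromovProd_comm hgen, ← zpow_neg]
    exact hyp.gromovProd_zpow_lt hS hgen hmin (-k)
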